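/- arXiv:2011.08097 — 5 statements merged into one kernel-verified Lean document; each statement's English description precedes it below -/
import Mathlib

section
/- Let G=(V,E) be a simple r-rank n-vertex hypergraph with min-cut capacity λ, and let (C, V∖C) be a min-cut with t := |C| = min{|C|,|V∖C|} satisfying r ≤ t < (λ/2)^{1/r}. Then there exists a vertex v ∈ C with degree |δ(v)| < λ, a contradiction; hence no min-cut (C,V∖C) with min{|C|,|V∖C|} ≥ r can have min{|C|,|V∖C|} < (λ/2)^{1/r}. -/
open Finset

/-- The capacity of the cut `(C, V ∖ C)`: the number of hyperedges intersecting
both `C` and its complement. -/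
def cutCap {V : Type*} [Fintype V] [DecidableEq V]
    (E : Finset (Finset V)) (C : Finset V) : ℕ :=
  (E.filter (fun e => (e ∩ C).Nonempty ∧ (e ∩ Cᶜ).Nonempty)).card

/-- `(C, V ∖ C)` is a min-cut: both sides are nonempty and the capacity is
minimum among all cuts. -/
def IsMinCut {V : Type*} [Fintype V] [DecidableEq V]
    (E : Finset (Finset V)) (C : Finset V) : Prop :=
  C.Nonempty ∧ Cᶜ.Nonempty ∧
    ∀ D : Finset V, D.Nonempty → Dᶜ.Nonempty → cutCap E C ≤ cutCap E D

/-!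
The cut edges meet `C` in at most `r - 1` vertices each, so averaging over `C` gives a vertex
`v ∈ C` on at most `(r - 1) λ / |C|` of them. Every other edge at `v` lies inside `C` and is
determined by at most `r - 1` further vertices of `C`, so there are at most `|C| ^ (r - 1)` of
them. As `λ ≤ d(v)`, this gives `(|C| - r + 1) λ ≤ |C| ^ r`, hence `λ ≤ |C| ^ r` once `r ≤ |C|`.
-/

lemma Nat.sum_range_succ_choose_le_pow (s m : ℕ) :
    ∑ k ∈ range (m + 1), s.choose k ≤ (s + 1) ^ m := by
  induction m with
  | zero => simp
  | succ m ih =>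
    calc ∑ k ∈ range (m + 2), s.choose k
        = ∑ k ∈ range (m + 1), s.choose k + s.choose (m + 1) := sum_range_succ _ _
      _ ≤ (s + 1) ^ m + s * (s + 1) ^ m := by
        gcongr
        calc s.choose (m + 1) ≤ s ^ (m + 1) := Nat.choose_le_pow _ _
          _ = s * s ^ m := Nat.pow_succ'
          _ ≤ s * (s + 1) ^ m := by gcongr; omega
      _ = (s + 1) ^ (m + 1) := by ring

namespace Finset

variable {α : Type*} [DecidableEq α]

lemma card_filter_powerset_card_le_le_pow (A : Finset α) (m : ℕ) :
    #{S ∈ A.powerset | #S ≤ m} ≤ (#A + 1) ^ m :=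
  calc #{S ∈ A.powerset | #S ≤ m}
      ≤ #((range (m + 1)).biUnion (A.powersetCard ·)) := by
        refine card_le_card fun S hS => ?_
        rw [mem_filter, mem_powerset] at hS
        exact mem_biUnion.2 ⟨#S, mem_range.2 (by omega), mem_powersetCard.2 ⟨hS.1, rfl⟩⟩
    _ ≤ ∑ k ∈ range (m + 1), #(A.powersetCard k) := card_biUnion_le
    _ ≤ (#A + 1) ^ m := by
        simp only [card_powersetCard]
        exact Nat.sum_range_succ_choose_le_pow _ _

lemma exists_mem_card_mul_card_filter_mem_le_sum {C : Finset α} (hC : C.Nonempty)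
    (B : Finset (Finset α)) : ∃ a ∈ C, #C * #{b ∈ B | a ∈ b} ≤ ∑ t ∈ B, #(C ∩ t) := by
  obtain ⟨a, ha, hmin⟩ := C.exists_min_image (fun a => #{b ∈ B | a ∈ b}) hC
  exact ⟨a, ha, le_sum_card_inter hmin⟩

lemma card_filter_mem_subset_le_pow {E : Finset (Finset α)} {C : Finset α} {r : ℕ} {v : α}
    (hrank : ∀ e ∈ E, #e ≤ r) (hv : v ∈ C) :
    #{e ∈ E | v ∈ e ∧ e ⊆ C} ≤ #C ^ (r - 1) := by
  calc #{e ∈ E | v ∈ e ∧ e ⊆ C}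
      ≤ #{S ∈ (C.erase v).powerset | #S ≤ r - 1} := by
        refine card_le_card_of_injOn (·.erase v) (fun e he => ?_)
          ((erase_injOn' v).mono fun e he => (mem_filter.1 he).2.1)
        obtain ⟨heE, hve, heC⟩ := mem_filter.1 he
        rw [mem_coe, mem_filter, mem_powerset, card_erase_of_mem hve]
        exact ⟨erase_subset_erase v heC, Nat.sub_le_sub_right (hrank e heE) 1⟩
    _ ≤ (#(C.erase v) + 1) ^ (r - 1) := card_filter_powerset_card_le_le_pow _ _
    _ = #C ^ (r - 1) := by rw [card_erase_add_one hv]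

end Finset

open Finset

section Hypergraph

variable {V : Type*} [Fintype V] [DecidableEq V] {E : Finset (Finset V)} {C : Finset V}
  {r : ℕ} {v : V}

def cutEdges (E : Finset (Finset V)) (C : Finset V) : Finset (Finset V) :=
  {e ∈ E | (e ∩ C).Nonempty ∧ (e ∩ Cᶜ).Nonempty}

lemma cutCap_eq_card_cutEdges : cutCap E C = #(cutEdges E C) := rfl

lemma card_inter_lt_card_of_mem_cutEdges {e : Finset V} (he : e ∈ cutEdges E C) :
    #(C ∩ e) < #e := by
  obtain ⟨-, -, x, hx⟩ := mem_filter.1 he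
  rw [mem_inter, mem_compl] at hx
  exact card_lt_card ⟨inter_subset_right, fun h => hx.2 (mem_inter.1 (h hx.1)).1⟩

lemma exists_mem_card_mul_card_cutEdges_mem_le (hrank : ∀ e ∈ E, #e ≤ r) (hC : C.Nonempty) :
    ∃ v ∈ C, #C * #{e ∈ cutEdges E C | v ∈ e} ≤ cutCap E C * (r - 1) := by
  obtain ⟨v, hv, hle⟩ := exists_mem_card_mul_card_filter_mem_le_sum hC (cutEdges E C)
  refine ⟨v, hv, hle.trans ?_⟩
  rw [cutCap_eq_card_cutEdges, ← smul_eq_mul]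
  refine sum_le_card_nsmul _ _ _ fun e he => ?_
  have := card_inter_lt_card_of_mem_cutEdges he
  have := hrank e (mem_filter.1 he).1
  omega

lemma cutCap_singleton_le (hv : v ∈ C) :
    cutCap E {v} ≤ #{e ∈ E | v ∈ e ∧ e ⊆ C} + #{e ∈ cutEdges E C | v ∈ e} := by
  refine (card_le_card fun e he => ?_).trans (card_union_le _ _)
  obtain ⟨heE, ⟨x, hx⟩, -⟩ := mem_filter.1 he
  obtain rfl : x = v := mem_singleton.1 (mem_inter.1 hx).2
  have hve := (mem_inter.1 hx).1
  by_cases heC : e ⊆ C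
  · exact mem_union_left _ (mem_filter.2 ⟨heE, hve, heC⟩)
  · obtain ⟨y, hye, hyC⟩ := not_subset.1 heC
    refine mem_union_right _ (mem_filter.2 ⟨mem_filter.2 ⟨heE, ?_, ?_⟩, hve⟩)
    · exact ⟨x, mem_inter.2 ⟨hve, hv⟩⟩
    · exact ⟨y, mem_inter.2 ⟨hye, mem_compl.2 hyC⟩⟩

lemma IsMinCut.cutCap_le_cutCap_singleton (hC : IsMinCut E C) (hv : v ∈ C) :
    cutCap E C ≤ cutCap E {v} := by
  obtain ⟨-, ⟨w, hw⟩, hmin⟩ := hC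
  refine hmin {v} (singleton_nonempty v) ⟨w, ?_⟩
  rw [mem_compl, mem_singleton]
  rintro rfl
  exact mem_compl.1 hw hv

theorem IsMinCut.cutCap_le_card_pow (hrank : ∀ e ∈ E, #e ≤ r) (hr : 0 < r)
    (hC : IsMinCut E C) (ht : r ≤ #C) : cutCap E C ≤ #C ^ r := by
  obtain ⟨v, hv, hcut⟩ := exists_mem_card_mul_card_cutEdges_mem_le hrank hC.1
  have hdeg := (hC.cutCap_le_cutCap_singleton hv).trans (cutCap_singleton_le hv)
  have hin := card_filter_mem_subset_le_pow hrank hv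
  have key : #C * cutCap E C ≤ #C ^ r + cutCap E C * (r - 1) := by
    calc #C * cutCap E C
        ≤ #C * #C ^ (r - 1) + #C * #{e ∈ cutEdges E C | v ∈ e} := by
          rw [← mul_add]
          exact Nat.mul_le_mul_left _ (hdeg.trans (Nat.add_le_add_right hin _))
      _ ≤ #C ^ r + cutCap E C * (r - 1) := by
          rw [← pow_succ', Nat.sub_add_cancel hr]; gcongr
  obtain ⟨k, hk⟩ : ∃ k, #C = (r - 1) + 1 + k := ⟨#C - r, by omega⟩
  rw [hk] at key ⊢
  nlinarith

end Hypergraph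

theorem no_min_cut_of_size_between_r_and_root_general
    {V : Type*} [Fintype V] [DecidableEq V]
    (E : Finset (Finset V)) (r : ℕ) (hr : 2 ≤ r)
    (hsimple : ∀ e ∈ E, 2 ≤ e.card ∧ e.card ≤ r)
    (C : Finset V) (hC : IsMinCut E C)
    (ht : r ≤ C.card) :
    ((cutCap E C : ℝ) / 2) ^ ((1 : ℝ) / r) ≤ (C.card : ℝ) := by
  have hr0 : 0 < r := by omega
  have hcut : cutCap E C ≤ #C ^ r :=
    hC.cutCap_le_card_pow (fun e he => (hsimple e he).2) hr0 ht
  rw [one_div, Real.rpow_inv_le_iff_of_pos (by positivity) (by positivity) (by exact_mod_cast hr0),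
    Real.rpow_natCast]
  calc (cutCap E C : ℝ) / 2 ≤ cutCap E C := half_le_self (by positivity)
    _ ≤ (#C : ℝ) ^ r := by exact_mod_cast hcut

/-- In a simple `r`-rank hypergraph with min-cut capacity `λ`,
no min-cut `(C, V∖C)` with `min{|C|,|V∖C|} ≥ r` can have
`min{|C|,|V∖C|} < (λ/2)^{1/r}`. -/
theorem no_min_cut_of_size_between_r_and_root
    {V : Type*} [Fintype V] [DecidableEq V]
    (E : Finset (Finset V)) (r : ℕ) (hr : 2 ≤ r)
    (hsimple : ∀ e ∈ E, 2 ≤ e.card ∧ e.card ≤ r)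
    (C : Finset V) (hC : IsMinCut E C)
    (hsmaller : C.card = min C.card Cᶜ.card)
    (ht : r ≤ C.card) :
    ((cutCap E C : ℝ) / 2) ^ ((1 : ℝ) / r) ≤ (C.card : ℝ) :=
  no_min_cut_of_size_between_r_and_root_general E r hr hsimple C hC ht
end

section
/- Let G=(V,E) be an r-rank hypergraph with minimum degree δ and min-cut capacity λ ≤ δ. Let (C, V∖C) be a min-cut, let X ⊆ V, and let X' := Trim(X) be obtained from X by repeatedly removing vertices v with d_X(v) < d(v)/(2r) until none remain. If min{|X∩C|, |X∩(V∖C)|} ≤ (δ/(6r²))^{1/(r-1)}, then min{|X'∩C|, |X'∩(V∖C)|} ≤ 3r². -/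
open Finset

/-- Degree of a vertex: the number of hyperedges containing it. -/
def hypDeg {V : Type*} [Fintype V] [DecidableEq V]
    (E : Finset (Finset V)) (v : V) : ℕ :=
  (E.filter (fun e => v ∈ e)).card

/-- `d_X(v)`: the number of hyperedges containing `v` and contained in `X`. -/
def hypDegIn {V : Type*} [Fintype V] [DecidableEq V]
    (E : Finset (Finset V)) (X : Finset V) (v : V) : ℕ :=
  (E.filter (fun e => v ∈ e ∧ e ⊆ X)).card

/-- A single trim step: remove a vertex `v ∈ X` with `d_X(v) < d(v)/(2r)`. -/
def TrimStep {V : Type*} [Fintype V] [DecidableEq V]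
    (E : Finset (Finset V)) (r : ℕ) (X Y : Finset V) : Prop :=
  ∃ v ∈ X, 2 * r * hypDegIn E X v < hypDeg E v ∧ Y = X.erase v

/-- `X'` is the result of trimming `X`: a sequence of trim steps from `X` to `X'`
after which no vertex of `X'` can be removed. -/
def IsTrim {V : Type*} [Fintype V] [DecidableEq V]
    (E : Finset (Finset V)) (r : ℕ) (X X' : Finset V) : Prop :=
  Relation.ReflTransGen (TrimStep E r) X X' ∧
    ∀ v ∈ X', hypDeg E v ≤ 2 * r * hypDegIn E X' v

lemma trim_subset {V : Type*} [Fintype V] [DecidableEq V]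
    (E : Finset (Finset V)) (r : ℕ) (X X' : Finset V)
    (h : Relation.ReflTransGen (TrimStep E r) X X') : X' ⊆ X := by
  induction h with
  | refl => exact Finset.Subset.refl X
  | tail hab hbc ih =>
      obtain ⟨v, _, _, rfl⟩ := hbc
      exact le_trans (Finset.erase_subset v _) ih

lemma card_subsets_le {V : Type*} [Fintype V] [DecidableEq V]
    (E : Finset (Finset V)) (r : ℕ) (hrank : ∀ e ∈ E, e.card ≤ r)
    (T : Finset V) :
    (E.filter fun e => e ⊆ T ∧ e.Nonempty).card ≤ T.card ^ r := by
  rcases T.eq_empty_or_nonempty with hT | ⟨v₀, hv₀⟩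
  · subst hT
    have : E.filter (fun e => e ⊆ (∅ : Finset V) ∧ e.Nonempty) = ∅ := by
      refine Finset.filter_eq_empty_iff.2 fun e _ h => ?_
      rcases h with ⟨hsub, ⟨x, hx⟩⟩
      exact absurd (hsub hx) (Finset.notMem_empty x)
    rw [this]
    simp
  · set f : Finset V → (Fin r → V) := fun e i => e.toList.getD i (e.toList.getD 0 v₀) with hf
    have key : ∀ e ∈ E.filter (fun e => e ⊆ T ∧ e.Nonempty), ∀ x, x ∈ e ↔ ∃ i : Fin r, f e i = x := by
      intro e he x
      rw [Finset.mem_filter] at he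
      obtain ⟨heE, hsub, hne⟩ := he
      have hlen : e.toList.length = e.card := Finset.length_toList e
      have hler : e.toList.length ≤ r := by rw [hlen]; exact hrank e heE
      have hpos : 0 < e.toList.length := by
        rw [hlen]; exact Finset.card_pos.2 hne
      constructor
      · intro hx
        have : x ∈ e.toList := Finset.mem_toList.2 hx
        obtain ⟨j, hj, hget⟩ := List.mem_iff_getElem.1 this
        refine ⟨⟨j, lt_of_lt_of_le hj hler⟩, ?_⟩
        show e.toList.getD j _ = x
        rw [List.getD_eq_getElem _ _ hj]
        exact hget
      · rintro ⟨i, rfl⟩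
        by_cases hi : (i : ℕ) < e.toList.length
        · rw [hf]
          simp only []
          rw [List.getD_eq_getElem _ _ hi]
          exact Finset.mem_toList.1 (List.getElem_mem _)
        · rw [hf]
          simp only []
          rw [List.getD_eq_default _ _ (le_of_not_gt hi), List.getD_eq_getElem _ _ hpos]
          exact Finset.mem_toList.1 (List.getElem_mem _)
    have hmaps : ∀ e ∈ E.filter (fun e => e ⊆ T ∧ e.Nonempty),
        f e ∈ Fintype.piFinset (fun _ : Fin r => T) := by
      intro e he
      rw [Fintype.mem_piFinset]
      intro i
      have hmem : f e i ∈ e := (key e he (f e i)).2 ⟨i, rfl⟩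
      exact (Finset.mem_filter.1 he).2.1 hmem
    have hinj : Set.InjOn f (E.filter fun e => e ⊆ T ∧ e.Nonempty) := by
      intro e he e' he' hfe
      ext x
      rw [key e he x, key e' he' x, hfe]
    calc (E.filter fun e => e ⊆ T ∧ e.Nonempty).card
        ≤ (Fintype.piFinset (fun _ : Fin r => T)).card :=
          Finset.card_le_card_of_injOn f hmaps hinj
      _ = T.card ^ r := by simp [Fintype.card_piFinset]

lemma sum_card_filter {V : Type*} [Fintype V] [DecidableEq V]
    (E : Finset (Finset V)) (T : Finset V) (Q : Finset V → Prop) [DecidablePred Q] :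
    ∑ v ∈ T, (E.filter fun e => v ∈ e ∧ Q e).card = ∑ e ∈ E.filter Q, (e ∩ T).card := by
  calc ∑ v ∈ T, (E.filter fun e => v ∈ e ∧ Q e).card
      = ∑ v ∈ T, ∑ e ∈ E, if v ∈ e ∧ Q e then 1 else 0 := by
        refine Finset.sum_congr rfl fun v _ => ?_
        rw [Finset.card_filter]
    _ = ∑ e ∈ E, ∑ v ∈ T, if v ∈ e ∧ Q e then 1 else 0 := Finset.sum_comm
    _ = ∑ e ∈ E, if Q e then (e ∩ T).card else 0 := by
        refine Finset.sum_congr rfl fun e _ => ?_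
        by_cases hQ : Q e
        · simp only [hQ, and_true, if_true]
          simp [Finset.sum_ite_mem, Finset.inter_comm]
        · simp [hQ]
    _ = ∑ e ∈ E.filter Q, (e ∩ T).card := (Finset.sum_filter _ _).symm

lemma trim_core {V : Type*} [Fintype V] [DecidableEq V]
    (E : Finset (Finset V)) (r δ : ℕ) (hr : 2 ≤ r)
    (hrank : ∀ e ∈ E, e.card ≤ r)
    (hδmin : ∀ v : V, δ ≤ hypDeg E v)
    (C : Finset V) (hcut : cutCap E C ≤ δ)
    (X X' : Finset V) (hsub : X' ⊆ X)
    (hstop : ∀ v ∈ X', hypDeg E v ≤ 2 * r * hypDegIn E X' v)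
    (hsmall : ((X ∩ C).card : ℝ) ≤ ((δ : ℝ) / (6 * (r : ℝ) ^ 2)) ^ ((1 : ℝ) / ((r : ℝ) - 1))) :
    (X' ∩ C).card ≤ 3 * r ^ 2 := by
  set T := X' ∩ C with hTdef
  set t := T.card with htdef
  set a := (X ∩ C).card with hadef
  have hta : t ≤ a := Finset.card_le_card (Finset.inter_subset_inter hsub (Finset.Subset.refl C))
  have hrR : (2:ℝ) ≤ (r:ℝ) := by exact_mod_cast hr
  have hr1 : (r:ℝ) - 1 ≠ 0 := by linarith
  have hexp : (1:ℝ)/((r:ℝ)-1) ≠ 0 := div_ne_zero one_ne_zero hr1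
  rcases Nat.eq_zero_or_pos δ with hδ0 | hδpos
  · -- δ = 0 : hsmall forces X ∩ C = ∅
    have ha0 : (a:ℝ) ≤ 0 := by
      have h := hsmall
      rw [hδ0, Nat.cast_zero, zero_div, Real.zero_rpow hexp] at h
      exact h
    have : a = 0 := by exact_mod_cast le_antisymm ha0 (Nat.cast_nonneg a)
    omega
  · -- δ > 0
    have h6 : (0:ℝ) < 6*(r:ℝ)^2 := by positivity
    have hb : (0:ℝ) ≤ (δ:ℝ)/(6*(r:ℝ)^2) := by positivity
    have hpow : (a:ℝ) ^ (r-1 : ℕ) ≤ (δ:ℝ)/(6*(r:ℝ)^2) := by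
      have h1 : (a:ℝ) ^ (r-1:ℕ) ≤ (((δ:ℝ)/(6*(r:ℝ)^2)) ^ ((1:ℝ)/((r:ℝ)-1))) ^ (r-1:ℕ) :=
        pow_le_pow_left₀ (Nat.cast_nonneg a) hsmall _
      have h2 : (((δ:ℝ)/(6*(r:ℝ)^2)) ^ ((1:ℝ)/((r:ℝ)-1))) ^ (r-1:ℕ)
          = (δ:ℝ)/(6*(r:ℝ)^2) := by
        rw [← Real.rpow_natCast (((δ:ℝ)/(6*(r:ℝ)^2)) ^ ((1:ℝ)/((r:ℝ)-1))) (r-1),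
            ← Real.rpow_mul hb]
        have hc : ((r-1:ℕ):ℝ) = (r:ℝ) - 1 := by
          have h1r : 1 ≤ r := le_trans one_le_two hr
          push_cast [h1r]
          ring
        rw [hc, one_div, inv_mul_cancel₀ hr1, Real.rpow_one]
      rw [h2] at h1
      exact h1
    have hkey : 6 * r^2 * a^(r-1) ≤ δ := by
      have h3 : (a:ℝ)^(r-1:ℕ) * (6*(r:ℝ)^2) ≤ (δ:ℝ) := (le_div_iff₀ h6).mp hpow
      have h4 : ((6 * r^2 * a^(r-1) : ℕ) : ℝ) ≤ (δ:ℝ) := by push_cast; linarith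
      exact_mod_cast h4
    -- counting chain
    have hA : t * δ ≤ ∑ v ∈ T, hypDeg E v := by
      calc t * δ = ∑ _v ∈ T, δ := by rw [Finset.sum_const, smul_eq_mul]
        _ ≤ ∑ v ∈ T, hypDeg E v := Finset.sum_le_sum fun v _ => hδmin v
    have hB : ∑ v ∈ T, hypDeg E v ≤ 2 * r * ∑ v ∈ T, hypDegIn E X' v := by
      rw [Finset.mul_sum]
      exact Finset.sum_le_sum fun v hv => hstop v (Finset.mem_inter.1 hv).1
    have hC1 : ∀ v ∈ T, hypDegIn E X' v ≤
        (E.filter fun e => v ∈ e ∧ e ⊆ T).card +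
        (E.filter fun e => v ∈ e ∧ ((e ∩ C).Nonempty ∧ (e ∩ Cᶜ).Nonempty)).card := by
      intro v hv
      have hvC : v ∈ C := (Finset.mem_inter.1 hv).2
      have hsub2 : E.filter (fun e => v ∈ e ∧ e ⊆ X') ⊆
          (E.filter fun e => v ∈ e ∧ e ⊆ T) ∪
          (E.filter fun e => v ∈ e ∧ ((e ∩ C).Nonempty ∧ (e ∩ Cᶜ).Nonempty)) := by
        intro e he
        rw [Finset.mem_filter] at he
        obtain ⟨heE, hve, heX⟩ := he
        rw [Finset.mem_union, Finset.mem_filter, Finset.mem_filter]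
        by_cases hcc : e ⊆ C
        · exact Or.inl ⟨heE, hve, Finset.subset_inter heX hcc⟩
        · obtain ⟨w, hwe, hwc⟩ := Finset.not_subset.1 hcc
          exact Or.inr ⟨heE, hve, ⟨v, Finset.mem_inter.2 ⟨hve, hvC⟩⟩,
            ⟨w, Finset.mem_inter.2 ⟨hwe, Finset.mem_compl.2 hwc⟩⟩⟩
      calc hypDegIn E X' v = (E.filter fun e => v ∈ e ∧ e ⊆ X').card := rfl
        _ ≤ _ := le_trans (Finset.card_le_card hsub2) (Finset.card_union_le _ _)
    have hd1 : ∑ v ∈ T, (E.filter fun e => v ∈ e ∧ e ⊆ T).card ≤ r * t ^ r := by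
      rw [sum_card_filter]
      calc ∑ e ∈ E.filter (fun e => e ⊆ T), (e ∩ T).card
          ≤ ∑ e ∈ E.filter (fun e => e ⊆ T), (if e.Nonempty then r else 0) := by
            refine Finset.sum_le_sum fun e he => ?_
            by_cases hne : e.Nonempty
            · simp only [hne, if_true]
              exact le_trans (Finset.card_le_card Finset.inter_subset_left)
                (hrank e (Finset.mem_filter.1 he).1)
            · rw [Finset.not_nonempty_iff_eq_empty] at hne
              simp [hne]
        _ = r * (E.filter (fun e => e ⊆ T ∧ e.Nonempty)).card := by
            rw [Finset.sum_ite, Finset.sum_const, Finset.sum_const_zero, add_zero,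
              Finset.filter_filter, smul_eq_mul, mul_comm]
        _ ≤ r * t ^ r := Nat.mul_le_mul_left r (card_subsets_le E r hrank T)
    have hd2 : ∑ v ∈ T, (E.filter fun e => v ∈ e ∧ ((e ∩ C).Nonempty ∧ (e ∩ Cᶜ).Nonempty)).card
        ≤ r * δ := by
      rw [sum_card_filter]
      calc ∑ e ∈ E.filter (fun e => (e ∩ C).Nonempty ∧ (e ∩ Cᶜ).Nonempty), (e ∩ T).card
          ≤ ∑ _e ∈ E.filter (fun e => (e ∩ C).Nonempty ∧ (e ∩ Cᶜ).Nonempty), r :=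
            Finset.sum_le_sum fun e he => le_trans (Finset.card_le_card Finset.inter_subset_left)
              (hrank e (Finset.mem_filter.1 he).1)
        _ = (cutCap E C) * r := by rw [Finset.sum_const, smul_eq_mul]; rfl
        _ ≤ δ * r := Nat.mul_le_mul_right r hcut
        _ = r * δ := mul_comm _ _
    have hD : ∑ v ∈ T, hypDegIn E X' v ≤ r * t ^ r + r * δ := by
      have hsum : ∑ v ∈ T, hypDegIn E X' v ≤
          (∑ v ∈ T, (E.filter fun e => v ∈ e ∧ e ⊆ T).card) +
          (∑ v ∈ T, (E.filter fun e => v ∈ e ∧ ((e ∩ C).Nonempty ∧ (e ∩ Cᶜ).Nonempty)).card) := by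
        rw [← Finset.sum_add_distrib]
        exact Finset.sum_le_sum hC1
      omega
    have hmain : t * δ ≤ 2 * r^2 * t^r + 2 * r^2 * δ := by
      calc t * δ ≤ 2 * r * (r * t ^ r + r * δ) :=
            le_trans hA (le_trans hB (Nat.mul_le_mul_left (2*r) hD))
        _ = 2 * r^2 * t^r + 2 * r^2 * δ := by ring
    have htr : 6 * r^2 * t^r ≤ t * δ := by
      have h1 : 6*r^2*t^(r-1) ≤ δ :=
        le_trans (Nat.mul_le_mul_left _ (Nat.pow_le_pow_left hta _)) hkey
      have hts : t^(r-1) * t = t^r := by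
        rw [← pow_succ]
        congr 1
        omega
      calc 6*r^2*t^r = (6*r^2*t^(r-1)) * t := by
            rw [← hts]; ring

        _ ≤ δ * t := Nat.mul_le_mul_right t h1
        _ = t * δ := mul_comm _ _
    have hfin : t * (2*δ) ≤ (3*r^2) * (2*δ) := by nlinarith [hmain, htr]
    exact Nat.le_of_mul_le_mul_right hfin (by omega)

/-- If `G` has rank `r`, minimum degree `δ`, min-cut capacity `λ ≤ δ`,
`(C, V∖C)` is a min-cut, and `X' = Trim(X)` where
`min{|X∩C|, |X∩(V∖C)|} ≤ (δ/(6r²))^{1/(r-1)}`, then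
`min{|X'∩C|, |X'∩(V∖C)|} ≤ 3r²`. -/
theorem trim_bound
    {V : Type*} [Fintype V] [DecidableEq V]
    (E : Finset (Finset V)) (r δ : ℕ) (hr : 2 ≤ r)
    (hrank : ∀ e ∈ E, e.card ≤ r)
    (hδmin : ∀ v : V, δ ≤ hypDeg E v) (hδex : ∃ v : V, hypDeg E v = δ)
    (C : Finset V) (hC : IsMinCut E C) (hlamdelta : cutCap E C ≤ δ)
    (X X' : Finset V) (hX' : IsTrim E r X X')
    (hsmall : (min (X ∩ C).card (X ∩ Cᶜ).card : ℝ) ≤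
      ((δ : ℝ) / (6 * (r : ℝ) ^ 2)) ^ ((1 : ℝ) / ((r : ℝ) - 1))) :
    min (X' ∩ C).card (X' ∩ Cᶜ).card ≤ 3 * r ^ 2 := by
  obtain ⟨hsteps, hstop⟩ := hX'
  have hsub : X' ⊆ X := trim_subset E r X X' hsteps
  rcases le_total (X ∩ C).card (X ∩ Cᶜ).card with hle | hle
  · rw [min_eq_left (by exact_mod_cast hle : ((X ∩ C).card : ℝ) ≤ ((X ∩ Cᶜ).card : ℝ))] at hsmall
    exact le_trans (min_le_left _ _)
      (trim_core E r δ hr hrank hδmin C hlamdelta X X' hsub hstop hsmall)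
  · rw [min_eq_right (by exact_mod_cast hle : ((X ∩ Cᶜ).card : ℝ) ≤ ((X ∩ C).card : ℝ))] at hsmall
    have hcut' : cutCap E Cᶜ ≤ δ := by
      have hcc : cutCap E Cᶜ = cutCap E C := by
        unfold cutCap
        congr 1
        apply Finset.filter_congr
        intro e _
        rw [compl_compl]
        constructor
        · rintro ⟨h1, h2⟩; exact ⟨h2, h1⟩
        · rintro ⟨h1, h2⟩; exact ⟨h2, h1⟩
      rw [hcc]; exact hlamdelta
    exact le_trans (min_le_right _ _)
      (trim_core E r δ hr hrank hδmin Cᶜ hcut' X X' hsub hstop hsmall)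
end

section
/- Let G=(V,E) be an r-rank hypergraph with min-cut capacity λ ≥ r·(4r²)^r. Let (C, V∖C) be a min-cut with min{|C|, |V∖C|} ≥ 4r². Let X' ⊆ V with 0 < min{|X'∩C|, |X'∩(V∖C)|} ≤ 3r², and let X'' := Shave(X') = {v ∈ X' : d_{X'}(v) > (1−1/r²)d(v)}. Then min{|X''∩C|, |X''∩(V∖C)|} ≤ min{|X'∩C|, |X'∩(V∖C)|} − 1. -/
open Finset

/-- `Shave(X') = {v ∈ X' : d_{X'}(v) > (1 − 1/r²)·d(v)}`
(stated equivalently as `r²·d_{X'}(v) > (r²−1)·d(v)`). -/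
def shave {V : Type*} [Fintype V] [DecidableEq V]
    (E : Finset (Finset V)) (r : ℕ) (X' : Finset V) : Finset V :=
  X'.filter (fun v => (r ^ 2 - 1) * hypDeg E v < r ^ 2 * hypDegIn E X' v)

/-! If every vertex of `A = X' ∩ C` (the smaller side, after swapping `C` and `Cᶜ`) survived the
shave, move `A` across the cut. Minimality of `C` says the crossing edges inside `X'` are at most
the edges leaving `X'` at `A`, which by the shave condition make up less than `1/r²` of the
total degree of `A`. Counting the edges inside `X'` at `A` once per vertex (at most `r` for edges inside `A`,
at most `r - 1` for crossing ones) and using `d(v) ≥ λ` gives `(r - 1)·|A|·λ ≤ r²·#{e ⊆ A}`,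
while `#{e ⊆ A} ≤ (r + 1)|A|^r`; this is incompatible with `|A| ≤ 3r²` and `λ ≥ r(4r²)^r`. -/

lemma sum_card_filter_mem_le {α : Type*} [DecidableEq α] {A : Finset α}
    {F : Finset (Finset α)} {k : ℕ} (h : ∀ e ∈ F, #(A ∩ e) ≤ k) :
    ∑ v ∈ A, #{e ∈ F | v ∈ e} ≤ k * #F :=
  calc ∑ v ∈ A, #{e ∈ F | v ∈ e} = ∑ e ∈ F, #{v ∈ A | v ∈ e} :=
        sum_card_bipartiteAbove_eq_sum_card_bipartiteBelow (· ∈ ·)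
    _ ≤ ∑ _e ∈ F, k := sum_le_sum fun e he => by rw [filter_mem_eq_inter]; exact h e he
    _ = k * #F := by rw [sum_const, smul_eq_mul, mul_comm]

lemma card_filter_subset_le {V : Type*} [DecidableEq V] {E : Finset (Finset V)} {r : ℕ}
    (hrank : ∀ e ∈ E, #e ≤ r) {A : Finset V} (hA : A.Nonempty) :
    #{e ∈ E | e ⊆ A} ≤ (r + 1) * #A ^ r := by
  have hcover : {e ∈ E | e ⊆ A} ⊆ (range (r + 1)).biUnion fun i => A.powersetCard i := by
    intro e he
    obtain ⟨heE, heA⟩ := mem_filter.1 he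
    exact mem_biUnion.2 ⟨#e, mem_range.2 (Nat.lt_succ_of_le (hrank e heE)),
      mem_powersetCard.2 ⟨heA, rfl⟩⟩
  calc #{e ∈ E | e ⊆ A} ≤ ∑ i ∈ range (r + 1), (#A).choose i := by
        refine (card_le_card hcover).trans (card_biUnion_le.trans_eq ?_)
        exact sum_congr rfl fun i _ => card_powersetCard i A
    _ ≤ ∑ _i ∈ range (r + 1), #A ^ r := by
        refine sum_le_sum fun i hi => (Nat.choose_le_pow _ _).trans ?_
        exact Nat.pow_le_pow_right hA.card_pos (Nat.lt_succ_iff.1 (mem_range.1 hi))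
    _ = (r + 1) * #A ^ r := by rw [sum_const, card_range, smul_eq_mul]

lemma sq_mul_succ_mul_pow_lt_sub_one_mul {r a l : ℕ} (hr : 2 ≤ r) (ha : 1 ≤ a)
    (ha3 : a ≤ 3 * r ^ 2) (hl : r * (4 * r ^ 2) ^ r ≤ l) :
    r ^ 2 * ((r + 1) * a ^ r) < (r - 1) * (a * l) := by
  set b := (3 * r ^ 2) ^ (r - 1)
  have hb : 1 ≤ b := Nat.one_le_pow _ _ (by positivity)
  have hsplit : ∀ x : ℕ, x ^ r = x * x ^ (r - 1) := fun x => by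
    rw [← pow_succ', Nat.sub_add_cancel (by omega)]
  have hab : a ^ r ≤ a * b := by
    rw [hsplit]; exact Nat.mul_le_mul_left a (Nat.pow_le_pow_left ha3 _)
  have hbl : r * (4 * r ^ 2 * b) ≤ l := by
    refine le_trans ?_ hl
    rw [hsplit (4 * r ^ 2)]
    exact Nat.mul_le_mul_left _ (Nat.mul_le_mul_left _ (Nat.pow_le_pow_left (by omega) _))
  obtain ⟨s, rfl⟩ : ∃ s, r = s + 2 := ⟨r - 2, by omega⟩
  simp only [show s + 2 - 1 = s + 1 by omega]
  calc (s + 2) ^ 2 * ((s + 2 + 1) * a ^ (s + 2)) ≤ (s + 2) ^ 2 * ((s + 3) * (a * b)) := by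
        gcongr
    _ = ((s + 2) ^ 2 * (s + 3)) * (a * b) := by ring
    _ < ((s + 1) * (s + 2) * (4 * (s + 2) ^ 2)) * (a * b) :=
        Nat.mul_lt_mul_of_pos_right 
          (by nlinarith [Nat.zero_le (s ^ 3), Nat.zero_le (s ^ 4)]) (Nat.mul_pos ha hb)
    _ = (s + 1) * (a * ((s + 2) * (4 * (s + 2) ^ 2 * b))) := by ring
    _ ≤ (s + 1) * (a * l) := by gcongr

section Hypergraph

variable {V : Type*} [Fintype V] [DecidableEq V] (E : Finset (Finset V))

def hypDegOut (X : Finset V) (v : V) : ℕ :=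
  #{e ∈ E | v ∈ e ∧ ¬ e ⊆ X}

lemma hypDegIn_add_hypDegOut (X : Finset V) (v : V) :
    hypDegIn E X v + hypDegOut E X v = hypDeg E v := by
  unfold hypDeg hypDegIn hypDegOut
  rw [← card_filter_add_card_filter_not (s := {e ∈ E | v ∈ e}) (· ⊆ X), filter_filter,
    filter_filter]

lemma mem_shave_iff {r : ℕ} (hr : 1 ≤ r) {X : Finset V} {v : V} :
    v ∈ shave E r X ↔ v ∈ X ∧ r ^ 2 * hypDegOut E X v < hypDeg E v := by
  rw [shave, mem_filter, ← hypDegIn_add_hypDegOut E X v]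
  obtain ⟨q, hq⟩ : ∃ q, r ^ 2 = q + 1 := ⟨r ^ 2 - 1, by have := Nat.one_le_pow 2 r hr; omega⟩
  rw [hq, Nat.add_sub_cancel]
  constructor <;> rintro ⟨hv, h⟩ <;> refine ⟨hv, ?_⟩ <;> nlinarith

lemma cutCap_compl (C : Finset V) : cutCap E Cᶜ = cutCap E C := by
  simp only [cutCap, compl_compl, and_comm]

lemma cutCap_sdiff_add_card_le (C X : Finset V) :
    cutCap E (C \ X) + #{e ∈ E | e ⊆ X ∧ (e ∩ C).Nonempty ∧ (e ∩ Cᶜ).Nonempty} ≤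
      cutCap E C + ∑ v ∈ X ∩ C, hypDegOut E X v := by
  set R := {e ∈ E | e ⊆ X ∧ (e ∩ C).Nonempty ∧ (e ∩ Cᶜ).Nonempty}
  set δC := {e ∈ E | (e ∩ C).Nonempty ∧ (e ∩ Cᶜ).Nonempty}
  set N := (X ∩ C).biUnion fun v => {e ∈ E | v ∈ e ∧ ¬ e ⊆ X}
  have hRδ : R ⊆ δC := fun e he => by
    simp only [R, δC, mem_filter] at he ⊢; exact ⟨he.1, he.2.2⟩
  have hcover : {e ∈ E | (e ∩ (C \ X)).Nonempty ∧ (e ∩ (C \ X)ᶜ).Nonempty} ⊆ (δC \ R) ∪ N := by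
    intro e he
    simp only [R, δC, N, mem_filter, mem_union, mem_sdiff, mem_biUnion, Finset.Nonempty,
      mem_inter, mem_compl] at he ⊢
    obtain ⟨heE, ⟨x, hxe, hxC, hxX⟩, y, hye, hy⟩ := he
    by_cases heC : e ⊆ C
    · exact Or.inr ⟨y, ⟨by tauto, heC hye⟩, heE, hye, fun h => hxX (h hxe)⟩
    · exact Or.inl ⟨⟨heE, ⟨x, hxe, hxC⟩, not_subset.1 heC⟩, fun h => hxX (h.2.1 hxe)⟩
  calc cutCap E (C \ X) + #R ≤ #(δC \ R) + #N + #R :=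
        Nat.add_le_add_right ((card_le_card hcover).trans (card_union_le _ _)) _
    _ = cutCap E C + #N := by
        have hcap : cutCap E C = #δC := rfl
        have := card_le_card hRδ
        rw [card_sdiff_of_subset hRδ, hcap]; omega
    _ ≤ cutCap E C + ∑ v ∈ X ∩ C, hypDegOut E X v := Nat.add_le_add_left card_biUnion_le _

variable {E}

lemma IsMinCut.compl {C : Finset V} (hC : IsMinCut E C) : IsMinCut E Cᶜ :=
  ⟨hC.2.1, by simpa using hC.1, fun D hD hDc => cutCap_compl E C ▸ hC.2.2 D hD hDc⟩

lemma IsMinCut.cutCap_le_hypDeg {C : Finset V} (hC : IsMinCut E C) (v : V) :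
    cutCap E C ≤ hypDeg E v := by
  obtain ⟨x, hx⟩ := hC.1
  obtain ⟨y, hy⟩ := hC.2.1
  have hv : ({v}ᶜ : Finset V).Nonempty := by
    by_cases hxv : x = v
    · exact ⟨y, by simp only [mem_compl, mem_singleton] at hy ⊢; rintro rfl; exact hy (hxv ▸ hx)⟩
    · exact ⟨x, by simpa using hxv⟩
  refine (hC.2.2 {v} (singleton_nonempty v) hv).trans (card_le_card ?_)
  intro e he
  obtain ⟨heE, ⟨w, hw⟩, -⟩ := mem_filter.1 he
  obtain ⟨hwe, rfl⟩ := by simpa using hw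
  exact mem_filter.2 ⟨heE, hwe⟩

lemma IsMinCut.card_crossing_subset_le_sum_hypDegOut {C X : Finset V} (hC : IsMinCut E C)
    (hD : (C \ X).Nonempty) :
    #{e ∈ E | e ⊆ X ∧ (e ∩ C).Nonempty ∧ (e ∩ Cᶜ).Nonempty} ≤
      ∑ v ∈ X ∩ C, hypDegOut E X v := by
  have hDc : (C \ X)ᶜ.Nonempty := hC.2.1.mono (compl_subset_compl.2 sdiff_subset)
  have := hC.2.2 (C \ X) hD hDc
  have := cutCap_sdiff_add_card_le E C X
  omega

lemma sum_hypDegIn_le {r : ℕ} (hrank : ∀ e ∈ E, #e ≤ r) (C X : Finset V) :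
    ∑ v ∈ X ∩ C, hypDegIn E X v ≤ r * #{e ∈ E | e ⊆ X ∩ C} +
      (r - 1) * #{e ∈ E | e ⊆ X ∧ (e ∩ C).Nonempty ∧ (e ∩ Cᶜ).Nonempty} := by
  set A := X ∩ C
  set EA := {e ∈ E | e ⊆ A}
  set R := {e ∈ E | e ⊆ X ∧ (e ∩ C).Nonempty ∧ (e ∩ Cᶜ).Nonempty}
  have hcover : ∀ v ∈ A, hypDegIn E X v ≤ #{e ∈ EA | v ∈ e} + #{e ∈ R | v ∈ e} := by
    intro v hv
    refine (card_le_card fun e he => ?_).trans (card_union_le _ _)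
    obtain ⟨heE, hve, heX⟩ := by simpa only [mem_filter] using he
    by_cases heC : e ⊆ C
    · exact mem_union_left _ (mem_filter.2 ⟨mem_filter.2 ⟨heE, subset_inter heX heC⟩, hve⟩)
    · refine mem_union_right _ (mem_filter.2 ⟨mem_filter.2 ⟨heE, heX, ?_, ?_⟩, hve⟩)
      · exact ⟨v, mem_inter.2 ⟨hve, (mem_inter.1 hv).2⟩⟩
      · obtain ⟨x, hxe, hxC⟩ := not_subset.1 heC
        exact ⟨x, mem_inter.2 ⟨hxe, mem_compl.2 hxC⟩⟩
  have hEA : ∀ e ∈ EA, #(A ∩ e) ≤ r := fun e he =>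
    (card_le_card inter_subset_right).trans (hrank e (mem_filter.1 he).1)
  have hR : ∀ e ∈ R, #(A ∩ e) ≤ r - 1 := by
    intro e he
    obtain ⟨heE, -, -, x, hx⟩ := mem_filter.1 he
    obtain ⟨hxe, hxC⟩ := mem_inter.1 hx
    have hxA : x ∉ A := fun h => mem_compl.1 hxC (mem_inter.1 h).2
    have hsub : A ∩ e ⊂ e :=
      Finset.ssubset_iff_subset_ne.2 ⟨inter_subset_right, fun h =>
        hxA (mem_of_mem_inter_left (by rw [h]; exact hxe))⟩
    have := card_lt_card hsub
    have := hrank e heE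
    omega
  calc ∑ v ∈ A, hypDegIn E X v ≤ ∑ v ∈ A, (#{e ∈ EA | v ∈ e} + #{e ∈ R | v ∈ e}) :=
        sum_le_sum hcover
    _ ≤ r * #EA + (r - 1) * #R := by
        rw [sum_add_distrib]
        exact add_le_add (sum_card_filter_mem_le hEA) (sum_card_filter_mem_le hR)

lemma IsMinCut.sub_one_mul_card_mul_cutCap_le_of_subset_shave {r : ℕ} (hr : 1 ≤ r)
    (hrank : ∀ e ∈ E, #e ≤ r) {C X : Finset V} (hC : IsMinCut E C) (hD : (C \ X).Nonempty)
    (hshaved : X ∩ C ⊆ shave E r X) :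
    (r - 1) * (#(X ∩ C) * cutCap E C) ≤ r ^ 2 * #{e ∈ E | e ⊆ X ∩ C} := by
  have hsplit : ∑ v ∈ X ∩ C, hypDeg E v =
      ∑ v ∈ X ∩ C, hypDegIn E X v + ∑ v ∈ X ∩ C, hypDegOut E X v := by
    rw [← sum_add_distrib]
    exact sum_congr rfl fun v _ => (hypDegIn_add_hypDegOut E X v).symm
  have hshave : r ^ 2 * ∑ v ∈ X ∩ C, hypDegOut E X v ≤ ∑ v ∈ X ∩ C, hypDeg E v := by
    rw [mul_sum]
    exact sum_le_sum fun v hv => ((mem_shave_iff E hr).1 (hshaved hv)).2.le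
  have hdeg : #(X ∩ C) * cutCap E C ≤ ∑ v ∈ X ∩ C, hypDeg E v := by
    simpa using card_nsmul_le_sum _ (hypDeg E) _ fun v _ => hC.cutCap_le_hypDeg v
  have hcut := hC.card_crossing_subset_le_sum_hypDegOut hD
  have hin := sum_hypDegIn_le hrank C X
  generalize ∑ v ∈ X ∩ C, hypDeg E v = S at *
  generalize ∑ v ∈ X ∩ C, hypDegIn E X v = Sin at *
  generalize ∑ v ∈ X ∩ C, hypDegOut E X v = Sout at *
  generalize #{e ∈ E | e ⊆ X ∩ C} = EA at *
  generalize #{e ∈ E | e ⊆ X ∧ (e ∩ C).Nonempty ∧ (e ∩ Cᶜ).Nonempty} = R at *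
  obtain ⟨s, rfl⟩ : ∃ s, r = s + 1 := ⟨r - 1, by omega⟩
  rw [Nat.add_sub_cancel] at hin ⊢
  have hS : S ≤ (s + 1) * (EA + Sout) := by nlinarith
  have hout : s * Sout ≤ EA := by
    have : (s + 1) * ((s + 1) * Sout) ≤ (s + 1) * (EA + Sout) := by nlinarith
    have := Nat.le_of_mul_le_mul_left this (Nat.succ_pos s)
    nlinarith
  calc s * (#(X ∩ C) * cutCap E C) ≤ s * ((s + 1) * (EA + Sout)) :=
        Nat.mul_le_mul_left s (hdeg.trans hS)
    _ = s * (s + 1) * EA + (s + 1) * (s * Sout) := by ring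
    _ ≤ s * (s + 1) * EA + (s + 1) * EA := by gcongr
    _ = (s + 1) ^ 2 * EA := by ring

lemma IsMinCut.card_shave_inter_lt {r : ℕ} (hr : 2 ≤ r) (hrank : ∀ e ∈ E, #e ≤ r)
    {C X : Finset V} (hC : IsMinCut E C) (hlam : r * (4 * r ^ 2) ^ r ≤ cutCap E C)
    (hCcard : 4 * r ^ 2 ≤ #C) (hA : 0 < #(X ∩ C)) (hA3 : #(X ∩ C) ≤ 3 * r ^ 2) :
    #(shave E r X ∩ C) < #(X ∩ C) := by
  by_contra! hcard
  have hshaved : X ∩ C ⊆ shave E r X :=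
    (eq_of_subset_of_card_le (inter_subset_inter_right (filter_subset _ X)) hcard).symm.subset.trans
      inter_subset_left
  have hD : (C \ X).Nonempty := by
    rw [nonempty_iff_ne_empty, Ne, sdiff_eq_empty_iff_subset]
    intro hCX
    rw [inter_eq_right.2 hCX] at hA3
    nlinarith
  have key := hC.sub_one_mul_card_mul_cutCap_le_of_subset_shave (by omega) hrank hD hshaved
  have hEA := card_filter_subset_le hrank (card_pos.1 hA)
  have := sq_mul_succ_mul_pow_lt_sub_one_mul hr hA hA3 hlam
  have := Nat.mul_le_mul_left (r ^ 2) hEA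
  omega

end Hypergraph

/-- Suppose the `r`-rank hypergraph has min-cut capacity
`λ ≥ r(4r²)^r`, `(C, V∖C)` is a min-cut with `min{|C|,|V∖C|} ≥ 4r²`, and
`X' ⊆ V` satisfies `0 < min{|X'∩C|, |X'∩(V∖C)|} ≤ 3r²`. Then for
`X'' = Shave(X')` we have
`min{|X''∩C|, |X''∩(V∖C)|} ≤ min{|X'∩C|, |X'∩(V∖C)|} − 1`. -/
theorem shave_bound
    {V : Type*} [Fintype V] [DecidableEq V]
    (E : Finset (Finset V)) (r : ℕ) (hr : 2 ≤ r)
    (hrank : ∀ e ∈ E, e.card ≤ r)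
    (C : Finset V) (hC : IsMinCut E C)
    (hlam : r * (4 * r ^ 2) ^ r ≤ cutCap E C)
    (hside : 4 * r ^ 2 ≤ min C.card Cᶜ.card)
    (X' : Finset V)
    (hpos : 0 < min (X' ∩ C).card (X' ∩ Cᶜ).card)
    (hle : min (X' ∩ C).card (X' ∩ Cᶜ).card ≤ 3 * r ^ 2) :
    min ((shave E r X') ∩ C).card ((shave E r X') ∩ Cᶜ).card ≤
      min (X' ∩ C).card (X' ∩ Cᶜ).card - 1 := by
  rcases le_total #(X' ∩ C) #(X' ∩ Cᶜ) with h | h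
  · rw [min_eq_left h] at hpos hle ⊢
    have := hC.card_shave_inter_lt hr hrank hlam (le_min_iff.1 hside).1 hpos hle
    have := min_le_left #(shave E r X' ∩ C) #(shave E r X' ∩ Cᶜ)
    omega
  · rw [min_eq_right h] at hpos hle ⊢
    have := hC.compl.card_shave_inter_lt hr hrank (cutCap_compl E C ▸ hlam)
      (le_min_iff.1 hside).2 hpos hle
    have := min_le_right #(shave E r X' ∩ C) #(shave E r X' ∩ Cᶜ)
    omega
end

section
/- For every graph (possibly a multigraph) G=(V,E) with n vertices and m edges, and every real 0 < φ ≤ 1, there exists a partition {X₁,…,X_k} of V such that (1) Σᵢ |δ(Xᵢ)| = O(φ·m·log n), and (2) for every i and every nonempty S ⊊ Xᵢ, |E(S, Xᵢ∖S)| ≥ φ·min{vol(S), vol(Xᵢ∖S)}. -/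
/-!
Split along sparse cuts until every part is a `φ`-expander. A cut `(S, X \ S)` of weight below
`φ · min (vol S) (vol (X \ S))` is charged, at rate `φ` per unit of volume, to the side with fewer
vertices. A vertex is charged only when the size of its part at least halves, so at most `log₂ n`
times; as each cut edge is counted on both sides, the boundaries of the parts weigh at most
`2 φ · vol V · log₂ n = 4 φ m log₂ n`.
-/

open Finset Real

namespace Finpartition

variable {α : Type*} [DistribLattice α] [OrderBot α] [DecidableEq α] {a b c : α}

@[simps]
def disjUnion (P : Finpartition a) (Q : Finpartition b) (hab : Disjoint a b) (hc : a ⊔ b = c) :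
    Finpartition c where
  parts := P.parts ∪ Q.parts
  supIndep := by
    rw [supIndep_iff_pairwiseDisjoint, coe_union]
    exact P.disjoint.union Q.disjoint fun _ hx _ hy _ => hab.mono (P.le hx) (Q.le hy)
  sup_parts := by rw [sup_union, P.sup_parts, Q.sup_parts, hc]
  bot_notMem := by simp [P.bot_notMem, Q.bot_notMem]

lemma sum_disjUnion_parts {M : Type*} [AddCommMonoid M] (P : Finpartition a) (Q : Finpartition b)
    (hab : Disjoint a b) (hc : a ⊔ b = c) (f : α → M) :
    ∑ x ∈ (P.disjUnion Q hab hc).parts, f x = ∑ x ∈ P.parts, f x + ∑ x ∈ Q.parts, f x := by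
  refine sum_union (disjoint_left.2 fun x hP hQ => P.ne_bot hP ?_)
  exact (hab.mono (P.le hP) (Q.le hQ)).eq_bot_of_self

end Finpartition

namespace WeightedGraph

variable {V : Type*} (w : V → V → ℝ)

def cut (S T : Finset V) : ℝ := ∑ u ∈ S, ∑ v ∈ T, w u v

def vol [Fintype V] (S : Finset V) : ℝ := ∑ v ∈ S, ∑ u, w v u

def IsExpander [Fintype V] [DecidableEq V] (φ : ℝ) (X : Finset V) : Prop :=
  ∀ S ⊆ X, S.Nonempty → (X \ S).Nonempty → φ * min (vol w S) (vol w (X \ S)) ≤ cut w S (X \ S)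

variable {w}

lemma vol_nonneg [Fintype V] (hw₀ : ∀ u v, 0 ≤ w u v) (S : Finset V) : 0 ≤ vol w S :=
  sum_nonneg fun _ _ => sum_nonneg fun _ _ => hw₀ _ _

lemma cut_nonneg (hw₀ : ∀ u v, 0 ≤ w u v) (S T : Finset V) : 0 ≤ cut w S T :=
  sum_nonneg fun _ _ => sum_nonneg fun _ _ => hw₀ _ _

lemma cut_comm (hw : ∀ u v, w u v = w v u) (S T : Finset V) : cut w S T = cut w T S := by
  rw [cut, cut, sum_comm]
  simp only [hw]

lemma vol_union [Fintype V] [DecidableEq V] {S T : Finset V} (h : Disjoint S T) :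
    vol w (S ∪ T) = vol w S + vol w T :=
  sum_union h

lemma cut_union_left [DecidableEq V] {S T : Finset V} (h : Disjoint S T) (U : Finset V) :
    cut w (S ∪ T) U = cut w S U + cut w T U :=
  sum_union h

lemma cut_union_right [DecidableEq V] (S : Finset V) {T U : Finset V} (h : Disjoint T U) :
    cut w S (T ∪ U) = cut w S T + cut w S U := by
  simp only [cut, sum_union h, sum_add_distrib]

lemma cut_compl_add_cut_compl [Fintype V] [DecidableEq V] (hw : ∀ u v, w u v = w v u)
    {S T : Finset V} (h : Disjoint S T) :
    cut w S Sᶜ + cut w T Tᶜ = cut w (S ∪ T) (S ∪ T)ᶜ + 2 * cut w S T := by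
  have hS : Sᶜ = T ∪ (S ∪ T)ᶜ := by
    rw [compl_union, union_inter_distrib_left, union_compl, inter_univ,
      union_eq_right.2 (subset_compl_iff_disjoint_right.2 h.symm)]
  have hT : Tᶜ = S ∪ (S ∪ T)ᶜ := by
    rw [compl_union, union_inter_distrib_left, union_compl, univ_inter,
      union_eq_right.2 (subset_compl_iff_disjoint_right.2 h)]
  rw [hS, hT, cut_union_right _ (disjoint_compl_right.mono_left subset_union_right),
    cut_union_right _ (disjoint_compl_right.mono_left subset_union_left), cut_union_left h,
    cut_comm hw T S]
  ring

lemma sum_cut_compl_parts_top_le [Fintype V] [DecidableEq V] (hw₀ : ∀ u v, 0 ≤ w u v)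
    (X : Finset V) : ∑ Y ∈ (⊤ : Finpartition X).parts, cut w Y Yᶜ ≤ cut w X Xᶜ := by
  rw [← sum_singleton (fun Y => cut w Y Yᶜ) X]
  exact sum_le_sum_of_subset_of_nonneg (Finpartition.parts_top_subset X)
    fun _ _ _ => cut_nonneg hw₀ _ _

/-- For `s ≤ t`, the cost `min a b ≤ a` is paid by `log₂ (s + t) ≥ log₂ s + 1`. -/
lemma mul_logb_add_mul_logb_add_min_le {a b s t : ℝ} (ha : 0 ≤ a) (hb : 0 ≤ b) (hs : 1 ≤ s)
    (ht : 1 ≤ t) : a * logb 2 s + b * logb 2 t + min a b ≤ (a + b) * logb 2 (s + t) := by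
  wlog hst : s ≤ t generalizing a b s t
  · have := this hb ha ht hs (le_of_not_ge hst)
    rw [min_comm, add_comm t s] at this
    linarith
  have h2s : logb 2 s + 1 ≤ logb 2 (s + t) := by
    rw [← logb_self_eq_one one_lt_two, ← logb_mul (by positivity) two_ne_zero]
    exact logb_le_logb_of_le one_lt_two (by positivity) (by linarith)
  have ht' : logb 2 t ≤ logb 2 (s + t) :=
    logb_le_logb_of_le one_lt_two (by positivity) (by linarith)
  nlinarith [min_le_left a b]

theorem exists_expander_finpartition [Fintype V] [DecidableEq V] (hw : ∀ u v, w u v = w v u)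
    (hw₀ : ∀ u v, 0 ≤ w u v) {φ : ℝ} (hφ : 0 ≤ φ) (X : Finset V) :
    ∃ P : Finpartition X, (∀ Y ∈ P.parts, IsExpander w φ Y) ∧
      ∑ Y ∈ P.parts, cut w Y Yᶜ ≤ cut w X Xᶜ + 2 * φ * vol w X * logb 2 #X := by
  induction X using Finset.strongInduction with | H X ih => ?_
  by_cases hX : IsExpander w φ X
  · refine ⟨⊤, fun Y hY => mem_singleton.1 (Finpartition.parts_top_subset X hY) ▸ hX, ?_⟩
    have := vol_nonneg hw₀ X
    have : 0 ≤ logb 2 #X := div_nonneg (log_natCast_nonneg _) (log_nonneg one_le_two)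
    exact (sum_cut_compl_parts_top_le hw₀ X).trans (le_add_of_nonneg_right (by positivity))
  simp only [IsExpander, not_forall, not_le, exists_prop] at hX
  obtain ⟨S, hSX, hS, hXS, hsparse⟩ := hX
  set T := X \ S
  have hST : Disjoint S T := disjoint_sdiff
  have hSTX : S ∪ T = X := union_sdiff_of_subset hSX
  obtain ⟨P, hP, hPcut⟩ := ih S (ssubset_of_subset_of_ne hSX fun h => by simp [T, h] at hXS)
  obtain ⟨Q, hQ, hQcut⟩ := ih T (sdiff_ssubset hSX hS)
  refine ⟨P.disjUnion Q hST hSTX, ?_, ?_⟩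
  · simp only [Finpartition.disjUnion_parts, mem_union]
    rintro Y (hY | hY)
    exacts [hP Y hY, hQ Y hY]
  have hcard : (#X : ℝ) = #S + #T := by rw [← hSTX, card_union_of_disjoint hST]; push_cast; rfl
  have hcharge := mul_logb_add_mul_logb_add_min_le (vol_nonneg hw₀ S) (vol_nonneg hw₀ T)
    (s := #S) (t := #T) (by exact_mod_cast hS.card_pos) (by exact_mod_cast hXS.card_pos)
  rw [← hcard, ← vol_union hST, hSTX] at hcharge
  calc ∑ Y ∈ (P.disjUnion Q hST hSTX).parts, cut w Y Yᶜ
      = ∑ Y ∈ P.parts, cut w Y Yᶜ + ∑ Y ∈ Q.parts, cut w Y Yᶜ :=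
        Finpartition.sum_disjUnion_parts ..
    _ ≤ cut w S Sᶜ + cut w T Tᶜ + 2 * φ * (vol w S * logb 2 #S + vol w T * logb 2 #T) := by
        linarith
    _ = cut w X Xᶜ + 2 * cut w S T
          + 2 * φ * (vol w S * logb 2 #S + vol w T * logb 2 #T) := by
        rw [cut_compl_add_cut_compl hw hST, hSTX]
    _ ≤ cut w X Xᶜ + 2 * φ * vol w X * logb 2 #X := by
        linarith [mul_le_mul_of_nonneg_left hcharge hφ]

end WeightedGraph

/-- Existential expander decomposition for multigraphs:
There is an absolute constant `c` such that for every multigraph `G` on `n`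
vertices (given by a symmetric edge-multiplicity function `w`) with `m` edges
and every `0 < φ ≤ 1`, there is a partition `{X₁,…,X_k}` of the vertex set with
`Σᵢ |δ(Xᵢ)| ≤ c·φ·m·log n`, and for every part `Xᵢ` and nonempty `S ⊊ Xᵢ`,
`|E(S, Xᵢ∖S)| ≥ φ·min{vol(S), vol(Xᵢ∖S)}`. -/
theorem graph_expander_decomposition_exists :
    ∃ c : ℝ, 0 < c ∧
      ∀ (n : ℕ) (w : Fin n → Fin n → ℕ), (∀ u v, w u v = w v u) →
        ∀ m : ℕ, 2 * m = ∑ u : Fin n, ∑ v : Fin n, w u v →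
          ∀ φ : ℝ, 0 < φ → φ ≤ 1 →
            ∃ P : Finpartition (Finset.univ : Finset (Fin n)),
              ((∑ X ∈ P.parts, ∑ u ∈ X, ∑ v ∈ Xᶜ, w u v : ℕ) : ℝ) ≤
                  c * φ * m * Real.log n ∧
                ∀ X ∈ P.parts, ∀ S ⊆ X, S.Nonempty → (X \ S).Nonempty →
                  φ * min (∑ v ∈ S, ∑ u : Fin n, (w v u : ℝ))
                      (∑ v ∈ X \ S, ∑ u : Fin n, (w v u : ℝ)) ≤
                    ∑ u ∈ S, ∑ v ∈ X \ S, (w u v : ℝ) := by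
  refine ⟨4 / log 2, by positivity, fun n w hw m hm φ hφ _ => ?_⟩
  obtain ⟨P, hP, hPcut⟩ := WeightedGraph.exists_expander_finpartition
    (w := fun u v => (w u v : ℝ)) (by simp [hw]) (fun _ _ => Nat.cast_nonneg _) hφ.le univ
  have hvol : WeightedGraph.vol (fun u v => (w u v : ℝ)) univ = 2 * m := by
    simp only [WeightedGraph.vol]
    exact_mod_cast hm.symm
  refine ⟨P, ?_, hP⟩
  push_cast
  calc _ ≤ _ := hPcut
    _ = _ := by
      simp only [WeightedGraph.cut, compl_univ, sum_empty, sum_const_zero, hvol, logb, card_univ,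
        Fintype.card_fin, zero_add]
      ring
end

section
/- In the complete r-uniform hypergraph on N vertices (N > r ≥ 2), the capacity of a cut with t vertices on one side (1 ≤ t ≤ N/2) is Σ_{a=1}^{min(t,r-1)} binomial(t,a)·binomial(N−t, r−a), and this quantity is minimized at t = 1, where it equals binomial(N−1, r−1). Hence every min-cut of the complete r-uniform hypergraph isolates a single vertex and the min-cut capacity is binomial(N−1, r−1). -/
open Finset

/-- The complete `r`-uniform hypergraph: all `r`-element subsets of `V`. -/
def completeE (V : Type*) [Fintype V] [DecidableEq V] (r : ℕ) :
    Finset (Finset V) :=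
  (Finset.univ : Finset V).powersetCard r

lemma not_inter_nonempty {V : Type*} [Fintype V] [DecidableEq V]
    (C e : Finset V) : ¬(e ∩ C).Nonempty ↔ e ⊆ Cᶜ := by
  rw [Finset.not_nonempty_iff_eq_empty, ← Finset.disjoint_iff_inter_eq_empty,
    Finset.disjoint_left]
  simp [Finset.subset_iff]

lemma filter_subset_powersetCard {V : Type*} [Fintype V] [DecidableEq V]
    (C : Finset V) (r : ℕ) :
    Finset.filter (fun e => e ⊆ C) (Finset.univ.powersetCard r) = C.powersetCard r := by
  ext e; simp [Finset.mem_powersetCard, and_comm]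

/-- Key counting identity: crossing edges + edges inside `C` + edges inside `Cᶜ`
equals all edges. -/
lemma cutCap_complete_eq {V : Type*} [Fintype V] [DecidableEq V]
    (r : ℕ) (hr : 1 ≤ r) (C : Finset V) :
    cutCap (completeE V r) C + (C.card.choose r + Cᶜ.card.choose r)
      = (Fintype.card V).choose r := by
  classical
  have hsplit := Finset.card_filter_add_card_filter_not
    (s := completeE V r) (fun e => (e ∩ C).Nonempty ∧ (e ∩ Cᶜ).Nonempty)
  have hneg : (completeE V r).filter
      (fun e => ¬((e ∩ C).Nonempty ∧ (e ∩ Cᶜ).Nonempty))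
      = C.powersetCard r ∪ Cᶜ.powersetCard r := by
    ext e
    simp only [Finset.mem_filter, Finset.mem_union, Finset.mem_powersetCard,
      completeE, Finset.mem_powersetCard]
    constructor
    · rintro ⟨⟨-, hcard⟩, h⟩
      rw [not_and_or, not_inter_nonempty, not_inter_nonempty, compl_compl] at h
      rcases h with h | h
      · exact Or.inr ⟨h, hcard⟩
      · exact Or.inl ⟨h, hcard⟩
    · rintro (⟨hsub, hcard⟩ | ⟨hsub, hcard⟩)
      · refine ⟨⟨Finset.subset_univ _, hcard⟩, ?_⟩
        rw [not_and_or]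
        exact Or.inr ((not_inter_nonempty Cᶜ e).mpr (by simpa using hsub))
      · refine ⟨⟨Finset.subset_univ _, hcard⟩, ?_⟩
        rw [not_and_or]
        exact Or.inl ((not_inter_nonempty C e).mpr hsub)
  have hdisj : Disjoint (C.powersetCard r) (Cᶜ.powersetCard r) := by
    rw [Finset.disjoint_left]
    intro e he1 he2
    rw [Finset.mem_powersetCard] at he1 he2
    have hne : e.Nonempty := Finset.card_pos.mp (by omega)
    obtain ⟨x, hx⟩ := hne
    have := he2.1 hx
    simp at this
    exact this (he1.1 hx)
  have hcards : ((completeE V r).filter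
      (fun e => ¬((e ∩ C).Nonempty ∧ (e ∩ Cᶜ).Nonempty))).card
      = C.card.choose r + Cᶜ.card.choose r := by
    rw [hneg, Finset.card_union_of_disjoint hdisj, Finset.card_powersetCard,
      Finset.card_powersetCard]
  have htot : (completeE V r).card = (Fintype.card V).choose r := by
    rw [completeE, Finset.card_powersetCard, Finset.card_univ]
  rw [cutCap]
  omega

/-- Vandermonde rearrangement. -/
lemma sum_identity (N t r : ℕ) (ht : t ≤ N) (hr : 2 ≤ r) :
    t.choose r + (N - t).choose r +
      ∑ a ∈ Finset.Icc 1 (min t (r - 1)), t.choose a * (N - t).choose (r - a)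
      = N.choose r := by
  have hN : N = t + (N - t) := by omega
  have hvdm : N.choose r = ∑ a ∈ Finset.range (r + 1),
      t.choose a * (N - t).choose (r - a) := by
    conv_lhs => rw [hN, Nat.add_choose_eq]
    rw [Finset.Nat.sum_antidiagonal_eq_sum_range_succ_mk]
  -- peel off a = r and a = 0
  obtain ⟨s, hs⟩ : ∃ s, r = s + 1 + 1 := ⟨r - 2, by omega⟩
  subst hs
  rw [Finset.sum_range_succ, Finset.sum_range_succ'] at hvdm
  simp only [Nat.sub_self, Nat.sub_zero, Nat.add_sub_cancel, Nat.choose_zero_right, Nat.choose_self, mul_one, one_mul] at hvdm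
  -- remaining sum over range (s+1) of f (a+1) equals sum over Icc 1 (s+1)
  have hIcc : ∑ a ∈ Finset.Icc 1 (s + 1), t.choose a * (N - t).choose (s + 1 + 1 - a)
      = ∑ a ∈ Finset.range (s + 1), t.choose (a + 1) * (N - t).choose (s + 1 + 1 - (a + 1)) := by
    rw [show Finset.Icc 1 (s + 1) = Finset.Ico 1 (s + 2) from rfl,
      Finset.sum_Ico_eq_sum_range]
    apply Finset.sum_congr (by norm_num)
    intro a _
    rw [Nat.add_comm 1 a]
  have hmin : ∑ a ∈ Finset.Icc 1 (min t (s + 1)), t.choose a * (N - t).choose (s + 1 + 1 - a)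
      = ∑ a ∈ Finset.Icc 1 (s + 1), t.choose a * (N - t).choose (s + 1 + 1 - a) := by
    apply Finset.sum_subset
    · exact Finset.Icc_subset_Icc_right (min_le_right _ _)
    · intro a ha hna
      rw [Finset.mem_Icc] at ha hna
      have : t < a := by omega
      rw [Nat.choose_eq_zero_of_lt this, zero_mul]
  have : (s + 1 + 1) - 1 = s + 1 := by omega
  rw [this] at *
  simp only [show s + 1 + 1 = s + 2 from rfl] at hvdm hmin hIcc ⊢
  rw [hmin, hIcc]
  omega

/-- One step of monotonicity. -/
lemma step_mono (N t r : ℕ) (h2 : 2 * (t + 1) ≤ N) :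
    (t + 1).choose r + (N - (t + 1)).choose r ≤ t.choose r + (N - t).choose r := by
  rcases r with _ | r
  · simp
  have h1 : (t + 1).choose (r + 1) = t.choose r + t.choose (r + 1) :=
    Nat.choose_succ_succ t r
  have h2' : N - t = (N - (t + 1)) + 1 := by omega
  have h3 : (N - t).choose (r + 1) = (N - (t + 1)).choose r + (N - (t + 1)).choose (r + 1) := by
    rw [h2']; exact Nat.choose_succ_succ _ r
  have h4 : t.choose r ≤ (N - (t + 1)).choose r :=
    Nat.choose_le_choose r (by omega)
  omega

lemma le_of_range (N r : ℕ) (hr : 2 ≤ r) :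
    ∀ t, 1 ≤ t → 2 * t ≤ N →
      t.choose r + (N - t).choose r ≤ (N - 1).choose r := by
  intro t
  induction t with
  | zero => omega
  | succ n ih =>
    intro _ h2
    rcases Nat.eq_or_lt_of_le (show 1 ≤ n + 1 by omega) with h | h
    · have : n + 1 = 1 := h.symm
      rw [this, Nat.choose_eq_zero_of_lt (by omega)]
      omega
    · have hn1 : 1 ≤ n := by omega
      calc (n + 1).choose r + (N - (n + 1)).choose r
          ≤ n.choose r + (N - n).choose r := step_mono N n r h2
        _ ≤ (N - 1).choose r := ih hn1 (by omega)

lemma base_strict (N r : ℕ) (hr : 2 ≤ r) (hN : r < N) (hN4 : 4 ≤ N) :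
    (2 : ℕ).choose r + (N - 2).choose r < (N - 1).choose r := by
  have hpas : (N - 1).choose r = (N - 2).choose (r - 1) + (N - 2).choose r := by
    have h1 : N - 1 = (N - 2) + 1 := by omega
    obtain ⟨s, hs⟩ : ∃ s, r = s + 1 := ⟨r - 1, by omega⟩
    rw [h1, hs, Nat.choose_succ_succ]
    simp [hs]
  have h2r : (2 : ℕ).choose r ≤ 1 := by
    rcases Nat.lt_or_ge 2 r with h | h
    · rw [Nat.choose_eq_zero_of_lt h]; omega
    · have : r = 2 := by omega
      simp [this]
  have hpos : 0 < (N - 2).choose (r - 1) := Nat.choose_pos (by omega)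
  rcases Nat.lt_or_ge (r - 1) (N - 2) with h | h
  · -- C(N-2, r-1) ≥ 2 via Pascal
    have h22 : 2 ≤ (N - 2).choose (r - 1) := by
      obtain ⟨n, hn⟩ : ∃ n, N - 2 = n + 1 := ⟨N - 3, by omega⟩
      obtain ⟨k, hk⟩ : ∃ k, r - 1 = k + 1 := ⟨r - 2, by omega⟩
      rw [hn, hk, Nat.choose_succ_succ]
      have p1 : 0 < n.choose k := Nat.choose_pos (by omega)
      have p2 : 0 < n.choose (k + 1) := Nat.choose_pos (by omega)
      simp only [Nat.succ_eq_add_one] at *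
      omega
    omega
  · -- r - 1 ≥ N - 2 with r < N forces r = N - 1 ≥ 3, so C(2,r) = 0
    have : (2 : ℕ).choose r = 0 := Nat.choose_eq_zero_of_lt (by omega)
    omega

lemma lt_of_two_le (N r : ℕ) (hr : 2 ≤ r) (hN : r < N) :
    ∀ t, 2 ≤ t → 2 * t ≤ N →
      t.choose r + (N - t).choose r < (N - 1).choose r := by
  intro t
  induction t with
  | zero => omega
  | succ n ih =>
    intro h2t h2
    rcases Nat.lt_or_ge n 2 with h | h
    · have hn2 : n + 1 = 2 := by omega
      rw [hn2]
      exact base_strict N r hr hN (by omega)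
    · calc (n + 1).choose r + (N - (n + 1)).choose r
          ≤ n.choose r + (N - n).choose r := step_mono N n r h2
        _ < (N - 1).choose r := ih h (by omega)

/-- In the complete `r`-uniform hypergraph on `N > r ≥ 2` vertices,
a cut with `t` vertices on one side (`1 ≤ t ≤ N/2`) has capacity
`Σ_{a=1}^{min(t,r-1)} C(t,a)·C(N−t,r−a)`, minimized at `t = 1` where it equals
`C(N−1,r−1)`; hence every min-cut isolates a single vertex and the min-cut
capacity is `C(N−1,r−1)`. -/
theorem complete_uniform_hypergraph_min_cut
    {V : Type*} [Fintype V] [DecidableEq V]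
    (N r : ℕ) (hcard : Fintype.card V = N) (hr : 2 ≤ r) (hN : r < N) :
    (∀ C : Finset V, 1 ≤ C.card → 2 * C.card ≤ N →
        cutCap (completeE V r) C =
          ∑ a ∈ Finset.Icc 1 (min C.card (r - 1)),
            C.card.choose a * (N - C.card).choose (r - a)) ∧
      (∀ C : Finset V, 1 ≤ C.card → 2 * C.card ≤ N →
        (N - 1).choose (r - 1) ≤ cutCap (completeE V r) C) ∧
      (∀ C : Finset V, IsMinCut (completeE V r) C →
        min C.card Cᶜ.card = 1 ∧
          cutCap (completeE V r) C = (N - 1).choose (r - 1)) := by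
  have hr1 : 1 ≤ r := by omega
  have hpascal : (N - 1).choose (r - 1) + (N - 1).choose r = N.choose r := by
    obtain ⟨n, hn⟩ : ∃ n, N = n + 1 := ⟨N - 1, by omega⟩
    obtain ⟨s, hs⟩ : ∃ s, r = s + 1 := ⟨r - 1, by omega⟩
    subst hn hs
    simp [Nat.choose_succ_succ]
  have key : ∀ C : Finset V,
      cutCap (completeE V r) C + (C.card.choose r + Cᶜ.card.choose r) = N.choose r := by
    intro C
    rw [← hcard]
    exact cutCap_complete_eq r hr1 C
  have hcompl : ∀ C : Finset V, Cᶜ.card = N - C.card := by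
    intro C; rw [Finset.card_compl, hcard]
  refine ⟨?_, ?_, ?_⟩
  · intro C h1 h2
    have hk := key C
    have hs := sum_identity N C.card r (by omega) hr
    rw [hcompl C] at hk
    omega
  · intro C h1 h2
    have hk := key C
    have hle := le_of_range N r hr C.card h1 h2
    rw [hcompl C] at hk
    omega
  · intro C ⟨hC1, hC2, hmin⟩
    have hcC : 1 ≤ C.card := Finset.card_pos.mpr hC1
    have hcCc : 1 ≤ Cᶜ.card := Finset.card_pos.mpr hC2
    have hsum : C.card + Cᶜ.card = N := by
      rw [Finset.card_add_card_compl, hcard]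
    -- upper bound via a singleton
    have hNpos : 0 < Fintype.card V := by omega
    obtain ⟨v⟩ := Fintype.card_pos_iff.mp hNpos
    set D : Finset V := {v} with hD
    have hDcard : D.card = 1 := Finset.card_singleton v
    have hDccard : Dᶜ.card = N - 1 := by rw [hcompl]; omega
    have hDc : Dᶜ.Nonempty := Finset.card_pos.mp (by omega)
    have hcapD : cutCap (completeE V r) D = (N - 1).choose (r - 1) := by
      have hk := key D
      rw [hDcard, hDccard, Nat.choose_eq_zero_of_lt (by omega : 1 < r)] at hk
      omega
    have hupper : cutCap (completeE V r) C ≤ (N - 1).choose (r - 1) := by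
      rw [← hcapD]; exact hmin D (Finset.singleton_nonempty v) hDc
    -- lower bound: whichever side is smaller
    have hk := key C
    have hlb : C.card.choose r + Cᶜ.card.choose r ≤ (N - 1).choose r := by
      rcases le_or_gt C.card Cᶜ.card with h | h
      · have := le_of_range N r hr C.card hcC (by omega)
        rw [show N - C.card = Cᶜ.card by omega] at this
        exact this
      · have := le_of_range N r hr Cᶜ.card hcCc (by omega)
        rw [show N - Cᶜ.card = C.card by omega] at this
        omega
    have hcapC : cutCap (completeE V r) C = (N - 1).choose (r - 1) := by omega
    refine ⟨?_, hcapC⟩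
    by_contra hne
    have h2le : 2 ≤ min C.card Cᶜ.card := by omega
    have hstrict : C.card.choose r + Cᶜ.card.choose r < (N - 1).choose r := by
      rcases le_or_gt C.card Cᶜ.card with h | h
      · have := lt_of_two_le N r hr hN C.card (by omega) (by omega)
        rw [show N - C.card = Cᶜ.card by omega] at this
        exact this
      · have := lt_of_two_le N r hr hN Cᶜ.card (by omega) (by omega)
        rw [show N - Cᶜ.card = C.card by omega] at this
        omega
    omega
end
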